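/- arXiv:1401.7112 — 3 statements merged into one kernel-verified Lean document; each statement's English description precedes it below -/
import Mathlib

section
/- Let 1 < p < ∞ and let q satisfy 1/p + 1/q = 1. Let E = ℓ^p(ℕ, ℂ) and equip E × E with the norm ‖(x, y)‖ = (1/√2)·(‖x‖_p² + ‖y‖_p²)^{1/2} and ℂ × ℂ with the norm ‖(z₁, z₂)‖ = (1/√2)·(|z₁|² + |z₂|²)^{1/2}. Then for every map Λ : E × E → ℂ × ℂ that is additive, continuous, and 𝔹ℂ-homogeneous in the sense that Λ(a·x, b·y) = (a·Λ(x, y)₁, b·Λ(x, y)₂) for all a, b ∈ ℂ and x, y ∈ E, there exist unique sequences u, v ∈ ℓ^q(ℕ, ℂ) such that Λ(x, y) = (Σₙ xₙ uₙ, Σₙ yₙ vₙ) for all (x, y) ∈ E × E. Hence the dual space of ℓ^p(𝔹ℂ) is ℓ^q(𝔹ℂ). -/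
noncomputable section

open scoped ENNReal

/-!
A continuous additive map that is homogeneous separately in each idempotent component is a pair
of continuous `ℂ`-linear functionals on `ℓ^p`, so everything reduces to the classical duality
`(ℓ^p)* = ℓ^q`. A functional `f` is represented by `uᵢ = f(eᵢ)`, and `u ∈ ℓ^q`: testing `f` on
the finitely supported vector `xᵢ = |uᵢ|^(q-2) conj uᵢ` (`i ∈ s`) gives `S ≤ ‖f‖ S^(1/p)` for
`S = ∑_{i ∈ s} |uᵢ|^q`, hence `S ≤ ‖f‖^q`.
-/

section

variable {𝕜 : Type*} [RCLike 𝕜]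

theorem norm_rpow_smul_conj {r : ℝ} (hr : r ≠ 1) (z : 𝕜) :
    ‖(‖z‖ ^ (r - 2)) • (starRingEnd 𝕜) z‖ = ‖z‖ ^ (r - 1) := by
  rw [norm_smul, RCLike.norm_conj, Real.norm_of_nonneg (by positivity),
    ← Real.rpow_add_one' (norm_nonneg z) (by contrapose! hr; linarith)]
  ring_nf

theorem rpow_smul_conj_mul_self {r : ℝ} (hr : r ≠ 0) (z : 𝕜) :
    (‖z‖ ^ (r - 2)) • (starRingEnd 𝕜) z * z = ((‖z‖ ^ r : ℝ) : 𝕜) := by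
  have : ‖z‖ ^ r = ‖z‖ ^ (r - 2) * ‖z‖ ^ (2 : ℝ) := by
    rw [← Real.rpow_add' (norm_nonneg z) (by simpa using hr)]
    ring_nf
  rw [smul_mul_assoc, RCLike.conj_mul, RCLike.real_smul_eq_coe_mul, this, Real.rpow_two]
  push_cast
  ring

end

theorem Real.HolderConjugate.le_rpow_of_le_mul_rpow {p q S C : ℝ} (hpq : p.HolderConjugate q)
    (hS : 0 ≤ S) (hC : 0 ≤ C) (h : S ≤ C * S ^ p⁻¹) : S ≤ C ^ q := by
  rcases hS.eq_or_lt with rfl | hS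
  · positivity
  have h' : S ^ q⁻¹ ≤ C := by
    refine le_of_mul_le_mul_right ?_ (Real.rpow_pos_of_pos hS p⁻¹)
    rwa [← Real.rpow_add hS, add_comm, hpq.inv_add_inv_eq_one, Real.rpow_one]
  calc S = (S ^ q⁻¹) ^ q := (Real.rpow_inv_rpow hS.le hpq.symm.ne_zero).symm
    _ ≤ C ^ q := Real.rpow_le_rpow (by positivity) h' hpq.symm.nonneg

namespace lp

variable {ι 𝕜 : Type*} [RCLike 𝕜] [DecidableEq ι] {p q : ℝ≥0∞}

theorem single_eq_smul_single_one (p : ℝ≥0∞) (i : ι) (a : 𝕜) :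
    (lp.single p i a : lp (fun _ : ι => 𝕜) p) = a • lp.single p i 1 := by
  rw [← lp.single_smul, smul_eq_mul, mul_one]

theorem tsum_single_one_mul (p : ℝ≥0∞) (w : ι → 𝕜) (i : ι) :
    ∑' j, (lp.single p i 1 : lp (fun _ : ι => 𝕜) p) j * w j = w i := by
  rw [tsum_eq_single i fun j hj => by rw [lp.single_apply_ne p i _ hj, zero_mul],
    lp.single_apply_self, one_mul]

variable [Fact (1 ≤ p)]

def dualSeq (f : lp (fun _ : ι => 𝕜) p →L[𝕜] 𝕜) (i : ι) : 𝕜 :=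
  f (lp.single p i 1)

theorem hasSum_mul_dualSeq (hp : p ≠ ⊤) (f : lp (fun _ : ι => 𝕜) p →L[𝕜] 𝕜)
    (x : lp (fun _ : ι => 𝕜) p) : HasSum (fun i => x i * dualSeq f i) (f x) := by
  convert (lp.hasSum_single hp x).mapL f using 2 with i
  rw [single_eq_smul_single_one, map_smul, smul_eq_mul, dualSeq]

theorem sum_norm_dualSeq_rpow_le (hpq : p.toReal.HolderConjugate q.toReal)
    (f : lp (fun _ : ι => 𝕜) p →L[𝕜] 𝕜) (s : Finset ι) :
    ∑ i ∈ s, ‖dualSeq f i‖ ^ q.toReal ≤ ‖f‖ ^ q.toReal := by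
  set u := dualSeq f
  set S := ∑ i ∈ s, ‖u i‖ ^ q.toReal
  -- the extremal vector of Hölder's inequality against `u` on `s`
  set x : lp (fun _ : ι => 𝕜) p :=
    ∑ i ∈ s, lp.single p i ((‖u i‖ ^ (q.toReal - 2)) • (starRingEnd 𝕜) (u i))
  have hfx : f x = S := by
    rw [map_sum, RCLike.ofReal_sum]
    refine Finset.sum_congr rfl fun i _ => ?_
    rw [single_eq_smul_single_one, map_smul, smul_eq_mul]
    exact rpow_smul_conj_mul_self hpq.symm.ne_zero (u i)
  have hx : ‖x‖ ^ p.toReal = S := by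
    rw [lp.norm_sum_single hpq.pos]
    refine Finset.sum_congr rfl fun i _ => ?_
    rw [norm_rpow_smul_conj hpq.symm.lt.ne' (u i), ← Real.rpow_mul (norm_nonneg _),
      hpq.symm.sub_one_mul_conj]
  have hS : 0 ≤ S := by positivity
  refine Real.HolderConjugate.le_rpow_of_le_mul_rpow hpq hS (norm_nonneg f) ?_
  calc S = ‖f x‖ := by rw [hfx, RCLike.norm_ofReal, abs_of_nonneg hS]
    _ ≤ ‖f‖ * ‖x‖ := f.le_opNorm x
    _ = ‖f‖ * S ^ p.toReal⁻¹ := by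
      rw [← hx, Real.rpow_rpow_inv (norm_nonneg x) hpq.ne_zero]

theorem memℓp_dualSeq (hpq : p.toReal.HolderConjugate q.toReal)
    (f : lp (fun _ : ι => 𝕜) p →L[𝕜] 𝕜) : Memℓp (dualSeq f) q :=
  memℓp_gen' (sum_norm_dualSeq_rpow_le hpq f)

theorem existsUnique_tsum_mul_eq (hpq : p.toReal.HolderConjugate q.toReal)
    (f : lp (fun _ : ι => 𝕜) p →L[𝕜] 𝕜) :
    ∃! u : lp (fun _ : ι => 𝕜) q, ∀ x : lp (fun _ : ι => 𝕜) p, f x = ∑' i, x i * u i := by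
  have hp : p ≠ ⊤ := (ENNReal.toReal_pos_iff.mp hpq.pos).2.ne
  refine ⟨⟨dualSeq f, memℓp_dualSeq hpq f⟩, fun x => (hasSum_mul_dualSeq hp f x).tsum_eq.symm,
    fun u hu => lp.ext (funext fun i => ?_)⟩
  rw [← tsum_single_one_mul p u i, ← hu]
  rfl

end lp

section ProdSplit

variable {R E F M N : Type*} [Semiring R]
  [AddCommMonoid E] [Module R E] [TopologicalSpace E]
  [AddCommMonoid F] [Module R F] [TopologicalSpace F]
  [AddCommMonoid M] [Module R M] [TopologicalSpace M]
  [AddCommMonoid N] [Module R N] [TopologicalSpace N]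

theorem exists_continuousLinearMap_prodMap_eq (Λ : E × F → M × N)
    (hadd : ∀ a b : E × F, Λ (a + b) = Λ a + Λ b) (hcont : Continuous Λ)
    (hhom : ∀ (a b : R) (x : E) (y : F), Λ (a • x, b • y) = (a • (Λ (x, y)).1, b • (Λ (x, y)).2)) :
    ∃ (f : E →L[R] M) (g : F →L[R] N), Λ = Prod.map f g := by
  have hfst (x : E) (y : F) : (Λ (x, 0)).1 = (Λ (x, y)).1 := by
    simpa using congrArg Prod.fst (hhom 1 0 x y)
  have hsnd (x : E) (y : F) : (Λ (0, y)).2 = (Λ (x, y)).2 := by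
    simpa using congrArg Prod.snd (hhom 0 1 x y)
  let f : E →L[R] M :=
    { toFun x := (Λ (x, 0)).1
      map_add' x x' := by simpa using congrArg Prod.fst (hadd (x, 0) (x', 0))
      map_smul' a x := by simpa using congrArg Prod.fst (hhom a 1 x 0)
      cont := continuous_fst.comp (hcont.comp (continuous_id.prodMk continuous_const)) }
  let g : F →L[R] N :=
    { toFun y := (Λ (0, y)).2
      map_add' y y' := by simpa using congrArg Prod.snd (hadd (0, y) (0, y'))
      map_smul' a y := by simpa using congrArg Prod.snd (hhom 1 a 0 y)
      cont := continuous_snd.comp (hcont.comp (continuous_const.prodMk continuous_id)) }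
  exact ⟨f, g, funext fun ⟨x, y⟩ => Prod.ext (hfst x y).symm (hsnd x y).symm⟩

end ProdSplit

/-- The dual of `ℓ^p(𝔹ℂ)` is `ℓ^q(𝔹ℂ)` (`1 < p < ∞`, `1/p + 1/q = 1`): every
continuous additive `𝔹ℂ`-homogeneous functional `Λ : ℓ^p × ℓ^p → ℂ × ℂ` (where
`ℓ^p(𝔹ℂ)` is identified with `ℓ^p(ℕ, ℂ) × ℓ^p(ℕ, ℂ)`, whose bicomplex norm induces
the product topology) is represented by a unique pair `(u, v) ∈ ℓ^q × ℓ^q` via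
`Λ(x, y) = (Σₙ xₙ uₙ, Σₙ yₙ vₙ)`. -/
theorem bicomplex_lp_dual (p q : ℝ≥0∞) [Fact (1 ≤ p)] (hp : 1 < p) (hp' : p ≠ ⊤)
    (hpq : 1 / p + 1 / q = 1)
    (Λ : lp (fun _ : ℕ => ℂ) p × lp (fun _ : ℕ => ℂ) p → ℂ × ℂ)
    (hadd : ∀ a b : lp (fun _ : ℕ => ℂ) p × lp (fun _ : ℕ => ℂ) p, Λ (a + b) = Λ a + Λ b)
    (hcont : Continuous Λ)
    (hhom : ∀ (a b : ℂ) (x y : lp (fun _ : ℕ => ℂ) p),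
      Λ (a • x, b • y) = (a * (Λ (x, y)).1, b * (Λ (x, y)).2)) :
    ∃! uv : lp (fun _ : ℕ => ℂ) q × lp (fun _ : ℕ => ℂ) q,
      ∀ x y : lp (fun _ : ℕ => ℂ) p,
        Λ (x, y) = (∑' n : ℕ, x n * uv.1 n, ∑' n : ℕ, y n * uv.2 n) := by
  have : p.HolderConjugate q := ENNReal.holderConjugate_iff.mpr (by simpa only [one_div] using hpq)
  have hq : q ≠ ⊤ := ((ENNReal.HolderConjugate.lt_top_iff_one_lt q p).mpr hp).ne
  have hpq' := ENNReal.HolderConjugate.toReal_of_ne_top hp' hq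
  obtain ⟨f, g, rfl⟩ := exists_continuousLinearMap_prodMap_eq (R := ℂ) Λ hadd hcont hhom
  obtain ⟨u, hu, hu_unique⟩ := lp.existsUnique_tsum_mul_eq hpq' f
  obtain ⟨v, hv, hv_unique⟩ := lp.existsUnique_tsum_mul_eq hpq' g
  refine ⟨(u, v), fun x y => Prod.ext (hu x) (hv y), fun ⟨u', v'⟩ h => ?_⟩
  exact Prod.ext (hu_unique u' fun x => congrArg Prod.fst (h x 0))
    (hv_unique v' fun y => congrArg Prod.snd (h 0 y))
end
end

section
/- Let (Ω, Σ, μ) be a finite measure space and let f = (f₁, f₂) be a pair of measurable complex-valued functions on Ω. Then f₁ and f₂ are essentially bounded (i.e. f ∈ L^∞(𝔹ℂ)) if and only if for every N-function φ one has ∫_Ω φ(|fᵢ|) dμ < ∞ for i = 1, 2. That is, L^∞(𝔹ℂ) equals the intersection of the Orlicz classes L̃^φ(𝔹ℂ) over all N-functions φ. -/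
/-!
An N-function is increasing on `[0, ∞)` (convex, nonnegative, vanishing at `0`), so on a finite
measure space a bound `‖f‖ ≤ C` a.e. gives `∫ φ(‖f‖) ≤ φ(C) μ(Ω) < ∞`. Conversely, if `‖f‖` is
not essentially bounded, every level set `{‖f‖ ≥ n + 2}` has positive measure `aₙ`; the function
`φ(x) = x² + ∑ₙ tₙ (x - (n + 1))⁺` with `tₙ = n / aₙ` is an N-function (a locally finite sum of
convex ramps, equal to `x²` on `[0, 1]`), and `∫ φ(‖f‖) ≥ φ(n + 2) aₙ ≥ tₙ aₙ = n` for every `n`.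
-/

noncomputable section

open MeasureTheory
open scoped ENNReal NNReal

/-- An N-function: a continuous convex function `φ : [0, ∞) → [0, ∞)` with
`φ(x) = 0 ↔ x = 0`, `φ(x)/x → 0` as `x → 0⁺`, and `φ(x)/x → ∞` as `x → ∞`. -/
structure NFun where
  toFun : ℝ → ℝ
  nonneg : ∀ x : ℝ, 0 ≤ x → 0 ≤ toFun x
  continuousOn : ContinuousOn toFun (Set.Ici 0)
  convexOn : ConvexOn ℝ (Set.Ici 0) toFun
  zero_iff : ∀ x : ℝ, 0 ≤ x → (toFun x = 0 ↔ x = 0)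
  tendsto_zero : Filter.Tendsto (fun x => toFun x / x) (nhdsWithin 0 (Set.Ioi 0)) (nhds 0)
  tendsto_top : Filter.Tendsto (fun x => toFun x / x) Filter.atTop Filter.atTop

open Set Filter

theorem convexOn_tsum {ι E : Type*} [AddCommMonoid E] [Module ℝ E] {s : Set E}
    {f : ι → E → ℝ} (hs : Convex ℝ s) (hf : ∀ i, ConvexOn ℝ s (f i))
    (hsum : ∀ x ∈ s, Summable fun i => f i x) : ConvexOn ℝ s fun x => ∑' i, f i x := by
  refine ⟨hs, fun x hx y hy a b ha hb hab => ?_⟩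
  calc ∑' i, f i (a • x + b • y) ≤ ∑' i, (a • f i x + b • f i y) :=
        Summable.tsum_le_tsum (fun i => (hf i).2 hx hy ha hb hab) (hsum _ (hs hx hy ha hb hab))
          (((hsum x hx).const_smul a).add ((hsum y hy).const_smul b))
    _ = a • ∑' i, f i x + b • ∑' i, f i y := by
        rw [((hsum x hx).const_smul a).tsum_add ((hsum y hy).const_smul b),
          (hsum x hx).tsum_const_smul, (hsum y hy).tsum_const_smul]

namespace NFun

variable (φ : NFun)

theorem apply_zero : φ.toFun 0 = 0 := (φ.zero_iff 0 le_rfl).2 rfl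

theorem monotoneOn : MonotoneOn φ.toFun (Ici 0) := by
  intro x (hx : 0 ≤ x) y (hy : 0 ≤ y) hxy
  rcases hx.eq_or_lt with rfl | hx
  · rw [φ.apply_zero]
    exact φ.nonneg y hy
  rcases hxy.eq_or_lt with rfl | hxy
  · exact le_rfl
  refine φ.convexOn.le_right_of_left_le (x := 0) self_mem_Ici hy ?_ ?_
  · rw [openSegment_eq_Ioo (hx.trans hxy)]
    exact ⟨hx, hxy⟩
  · rw [φ.apply_zero]
    exact φ.nonneg x hx.le

theorem lintegral_comp_norm_lt_top {Ω E : Type*} [MeasurableSpace Ω] [SeminormedAddCommGroup E]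
    (μ : Measure Ω) [IsFiniteMeasure μ] {f : Ω → E} {C : ℝ} (hC : ∀ᵐ x ∂μ, ‖f x‖ ≤ C) :
    ∫⁻ x, ENNReal.ofReal (φ.toFun ‖f x‖) ∂μ < ⊤ :=
  calc ∫⁻ x, ENNReal.ofReal (φ.toFun ‖f x‖) ∂μ ≤ ∫⁻ _, ENNReal.ofReal (φ.toFun C) ∂μ :=
        lintegral_mono_ae <| hC.mono fun _ hx => ENNReal.ofReal_le_ofReal <|
          φ.monotoneOn (norm_nonneg _) ((norm_nonneg _).trans hx) hx
    _ < ⊤ := lintegral_const_lt_top ENNReal.ofReal_ne_top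

theorem mul_meas_ge_le_lintegral_comp_norm {Ω E : Type*} [MeasurableSpace Ω]
    [SeminormedAddCommGroup E] {μ : Measure Ω} {f : Ω → E} (hf : AEStronglyMeasurable f μ) {r : ℝ}
    (hr : 0 ≤ r) :
    ENNReal.ofReal (φ.toFun r) * μ {x | r ≤ ‖f x‖} ≤
      ∫⁻ x, ENNReal.ofReal (φ.toFun ‖f x‖) ∂μ := by
  have hS : NullMeasurableSet {x | r ≤ ‖f x‖} μ :=
    hf.norm.aemeasurable.nullMeasurable measurableSet_Ici
  rw [← lintegral_indicator_const₀ hS]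
  exact lintegral_mono <| indicator_le fun x (hx : r ≤ ‖f x‖) =>
    ENNReal.ofReal_le_ofReal (φ.monotoneOn hr (hr.trans hx) hx)

section Ramps

variable {t : ℕ → ℝ} {x : ℝ}

def rampSum (t : ℕ → ℝ) (x : ℝ) : ℝ := x ^ 2 + ∑' n : ℕ, t n * max (x - (n + 1)) 0

theorem ramp_eq_zero_of_le {n : ℕ} (h : x ≤ n + 1) : t n * max (x - (n + 1)) 0 = 0 := by
  rw [max_eq_right (sub_nonpos.mpr h), mul_zero]

theorem summable_ramp (t : ℕ → ℝ) (x : ℝ) : Summable fun n : ℕ => t n * max (x - (n + 1)) 0 := by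
  refine summable_of_ne_finset_zero (s := Finset.range ⌈x⌉₊) fun n hn => ramp_eq_zero_of_le ?_
  rw [Finset.mem_range, not_lt] at hn
  exact (Nat.le_ceil x).trans (by exact_mod_cast hn.trans n.le_succ)

theorem rampSum_of_le_one (hx : x ≤ 1) : rampSum t x = x ^ 2 := by
  have hzero : ∀ n : ℕ, t n * max (x - (n + 1)) 0 = 0 := fun n =>
    ramp_eq_zero_of_le (hx.trans (by simp))
  simp only [rampSum, hzero, tsum_zero, add_zero]

theorem sq_le_rampSum (ht : ∀ n, 0 ≤ t n) (x : ℝ) : x ^ 2 ≤ rampSum t x :=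
  le_add_of_nonneg_right <| tsum_nonneg fun n => mul_nonneg (ht n) (le_max_right _ _)

theorem le_rampSum (ht : ∀ n, 0 ≤ t n) (n : ℕ) : t n ≤ rampSum t (n + 2) := by
  have hramp : t n * max ((n + 2 : ℝ) - (n + 1)) 0 = t n := by norm_num
  calc t n ≤ ∑' k : ℕ, t k * max ((n + 2 : ℝ) - (k + 1)) 0 :=
        hramp ▸ (summable_ramp t _).le_tsum n fun k _ => mul_nonneg (ht k) (le_max_right _ _)
    _ ≤ rampSum t (n + 2) := le_add_of_nonneg_left (sq_nonneg _)

theorem convexOn_rampSum (ht : ∀ n, 0 ≤ t n) : ConvexOn ℝ univ (rampSum t) := by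
  have hramp (n : ℕ) : ConvexOn ℝ univ fun x : ℝ => t n * max (x - (n + 1)) 0 :=
    (((convexOn_id convex_univ).sub (concaveOn_const _ convex_univ)).sup
      (convexOn_const 0 convex_univ)).smul (ht n)
  exact (even_two.convexOn_pow).add
    (convexOn_tsum convex_univ hramp fun x _ => summable_ramp t x)

theorem continuous_rampSum (ht : ∀ n, 0 ≤ t n) : Continuous (rampSum t) := by
  simpa using (convexOn_rampSum ht).continuousOn_interior

end Ramps

def ofRamps (t : ℕ → ℝ) (ht : ∀ n, 0 ≤ t n) : NFun where
  toFun := rampSum t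
  nonneg x _ := (sq_nonneg x).trans (sq_le_rampSum ht x)
  continuousOn := (continuous_rampSum ht).continuousOn
  convexOn := (convexOn_rampSum ht).subset (subset_univ _) (convex_Ici 0)
  zero_iff x _ := by
    refine ⟨fun h => pow_eq_zero_iff two_ne_zero |>.mp ?_, fun h => ?_⟩
    · exact le_antisymm (h ▸ sq_le_rampSum ht x) (sq_nonneg x)
    · rw [h, rampSum_of_le_one zero_le_one]
      norm_num
  tendsto_zero := by
    refine tendsto_nhdsWithin_of_tendsto_nhds tendsto_id |>.congr' ?_
    filter_upwards [Ioo_mem_nhdsGT (zero_lt_one' ℝ)] with x hx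
    rw [rampSum_of_le_one hx.2.le, sq, mul_div_assoc, div_self hx.1.ne', mul_one, id]
  tendsto_top := by
    refine tendsto_atTop_mono' _ ?_ tendsto_id
    filter_upwards [eventually_gt_atTop 0] with x hx
    rw [id, le_div_iff₀ hx, ← sq]
    exact sq_le_rampSum ht x

theorem exists_le_apply_add_two (b : ℕ → ℝ) : ∃ φ : NFun, ∀ n : ℕ, b n ≤ φ.toFun (n + 2) :=
  ⟨ofRamps (fun n => max (b n) 0) fun _ => le_max_right _ _,
    fun n => (le_max_left _ _).trans (le_rampSum (fun _ => le_max_right _ _) n)⟩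

section Integrals

variable {Ω E : Type*} [MeasurableSpace Ω] [SeminormedAddCommGroup E] {μ : Measure Ω}
  {f : Ω → E}

theorem exists_lintegral_comp_norm_eq_top (hf : AEStronglyMeasurable f μ)
    (hunbdd : ¬ ∃ C : ℝ, ∀ᵐ x ∂μ, ‖f x‖ ≤ C) :
    ∃ φ : NFun, ∫⁻ x, ENNReal.ofReal (φ.toFun ‖f x‖) ∂μ = ⊤ := by
  -- truncating at `1` keeps the weights finite and positive even when `μ` is not finite
  set c : ℝ → ℝ≥0∞ := fun r => min (μ {x | r ≤ ‖f x‖}) 1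
  have hc_ne_zero (r : ℝ) : c r ≠ 0 := by
    refine (lt_min (pos_iff_ne_zero.2 ?_) one_pos).ne'
    refine measure_mono_null (fun x (hx : ¬ ‖f x‖ ≤ r) => (not_le.1 hx).le) |>.mt ?_
    exact ae_iff.not.1 (not_exists.1 hunbdd r)
  have hc_ne_top (r : ℝ) : c r ≠ ⊤ := (min_le_right _ _).trans_lt ENNReal.one_lt_top |>.ne
  obtain ⟨φ, hφ⟩ := exists_le_apply_add_two fun n => n / (c (n + 2)).toReal
  refine ⟨φ, ?_⟩
  by_contra hfin
  obtain ⟨n, hn⟩ := ENNReal.exists_nat_gt hfin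
  refine hn.not_ge ?_
  calc (n : ℝ≥0∞) = ENNReal.ofReal (n / (c (n + 2)).toReal) * c (n + 2) := by
        rw [ENNReal.ofReal_div_of_pos (ENNReal.toReal_pos (hc_ne_zero _) (hc_ne_top _)),
          ENNReal.ofReal_toReal (hc_ne_top _), ENNReal.ofReal_natCast,
          ENNReal.div_mul_cancel (hc_ne_zero _) (hc_ne_top _)]
    _ ≤ ENNReal.ofReal (φ.toFun (n + 2)) * μ {x | n + 2 ≤ ‖f x‖} :=
        mul_le_mul' (ENNReal.ofReal_le_ofReal (hφ n)) (min_le_left _ _)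
    _ ≤ ∫⁻ x, ENNReal.ofReal (φ.toFun ‖f x‖) ∂μ :=
        φ.mul_meas_ge_le_lintegral_comp_norm hf (by positivity)

theorem exists_ae_norm_le_iff_forall_lintegral_lt_top [IsFiniteMeasure μ]
    (hf : AEStronglyMeasurable f μ) :
    (∃ C : ℝ, ∀ᵐ x ∂μ, ‖f x‖ ≤ C) ↔
      ∀ φ : NFun, ∫⁻ x, ENNReal.ofReal (φ.toFun ‖f x‖) ∂μ < ⊤ := by
  refine ⟨fun ⟨C, hC⟩ φ => φ.lintegral_comp_norm_lt_top μ hC, fun h => ?_⟩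
  by_contra hunbdd
  obtain ⟨φ, hφ⟩ := exists_lintegral_comp_norm_eq_top hf hunbdd
  exact (h φ).ne hφ

end Integrals

end NFun

/-- On a finite measure space, a pair `(f₁, f₂)` of measurable complex functions is in
`L^∞(𝔹ℂ)` (both components essentially bounded) iff it lies in the Orlicz class
`L̃^φ(𝔹ℂ)` of every N-function `φ`: `L^∞(𝔹ℂ) = ⋂_φ L̃^φ(𝔹ℂ)`. -/
theorem bicomplex_Linfty_eq_inter_orlicz_classes {Ω : Type*} [MeasurableSpace Ω]
    (μ : Measure Ω) [IsFiniteMeasure μ] (f₁ f₂ : Ω → ℂ)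
    (hm₁ : Measurable f₁) (hm₂ : Measurable f₂) :
    ((∃ C : ℝ, ∀ᵐ x ∂μ, ‖f₁ x‖ ≤ C) ∧ (∃ C : ℝ, ∀ᵐ x ∂μ, ‖f₂ x‖ ≤ C)) ↔
      (∀ φ : NFun,
        (∫⁻ x, ENNReal.ofReal (φ.toFun ‖f₁ x‖) ∂μ) < ⊤ ∧
        (∫⁻ x, ENNReal.ofReal (φ.toFun ‖f₂ x‖) ∂μ) < ⊤) := by
  rw [NFun.exists_ae_norm_le_iff_forall_lintegral_lt_top hm₁.aestronglyMeasurable,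
    NFun.exists_ae_norm_le_iff_forall_lintegral_lt_top hm₂.aestronglyMeasurable, forall_and]
end
end

section
/- Let (Ω, Σ, μ) be a σ-finite complete measure space, let φ be an Orlicz function satisfying the Δ₂ condition, and let T : Ω → Ω be a non-singular measurable transformation. Then the composition operator C_T, defined on pairs by C_T(f₁, f₂) = (f₁ ∘ T, f₂ ∘ T), maps L^φ(𝔹ℂ) boundedly into itself (i.e. there exists C > 0 such that for every f ∈ L^φ(𝔹ℂ) one has C_T f ∈ L^φ(𝔹ℂ) and ‖C_T f‖_{φ,𝔹ℂ} ≤ C·‖f‖_{φ,𝔹ℂ}) if and only if there exists a constant m > 0 such that μ(T⁻¹(A)) ≤ m·μ(A) for every A ∈ Σ with μ(A) < ∞. -/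
noncomputable section

open MeasureTheory
open scoped ENNReal NNReal

/-- An Orlicz function: a convex function `φ : [0, ∞) → [0, ∞]` with `φ(0) = 0`,
`φ(u) → ∞` as `u → ∞`, and `φ(u) < ∞` for some `0 < u < ∞`. -/
structure OrliczFun where
  toFun : ℝ≥0 → ℝ≥0∞
  zero : toFun 0 = 0
  convex : ∀ a b x y : ℝ≥0, a + b = 1 →
    toFun (a * x + b * y) ≤ (a : ℝ≥0∞) * toFun x + (b : ℝ≥0∞) * toFun y
  tendsto_top : Filter.Tendsto toFun Filter.atTop (nhds ⊤)
  exists_finite : ∃ u : ℝ≥0, 0 < u ∧ toFun u < ⊤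

/-- The modular `I_φ(f) = ∫_Ω φ(|f|) dμ`. -/
def modular (φ : OrliczFun) {Ω : Type*} [MeasurableSpace Ω] (μ : Measure Ω) (f : Ω → ℂ) :
    ℝ≥0∞ :=
  ∫⁻ x, φ.toFun ‖f x‖₊ ∂μ

/-- The Luxemburg norm `‖f‖_φ = inf {λ > 0 : I_φ(f/λ) ≤ 1}`. -/
def luxNorm (φ : OrliczFun) {Ω : Type*} [MeasurableSpace Ω] (μ : Measure Ω) (f : Ω → ℂ) : ℝ :=
  sInf {l : ℝ | 0 < l ∧ modular φ μ (fun x => f x / (l : ℂ)) ≤ 1}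

/-- Membership in the Orlicz space `L^φ(Ω)`. -/
def MemOrlicz (φ : OrliczFun) {Ω : Type*} [MeasurableSpace Ω] (μ : Measure Ω) (f : Ω → ℂ) :
    Prop :=
  Measurable f ∧ ∃ c : ℝ≥0, 0 < c ∧ modular φ μ (fun x => (c : ℂ) * f x) < ⊤

/-- The bicomplex Luxemburg norm `‖(f₁, f₂)‖_{φ,𝔹ℂ} = (1/√2)(‖f₁‖_φ² + ‖f₂‖_φ²)^{1/2}`. -/
def bcLuxNorm (φ : OrliczFun) {Ω : Type*} [MeasurableSpace Ω] (μ : Measure Ω)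
    (f : (Ω → ℂ) × (Ω → ℂ)) : ℝ :=
  (1 / Real.sqrt 2) * Real.sqrt (luxNorm φ μ f.1 ^ 2 + luxNorm φ μ f.2 ^ 2)

/-!
If `μ(T⁻¹A) ≤ m μ(A)` on sets of finite measure, σ-finiteness upgrades this to
`μ.map T ≤ m • μ`, hence `I_φ(f ∘ T) ≤ m I_φ(f)`, and convexity of `φ` turns this into
`‖f ∘ T‖_φ ≤ max m 1 · ‖f‖_φ`.

Conversely, test the operator on `(1_A, 0)`. The Luxemburg norm `a` of an indicator is pinned
down by `φ(1/l) μ(A) ≤ 1` for `l > a` and `> 1` for `l < a`, so `‖1_{T⁻¹A}‖_φ ≤ C ‖1_A‖_φ`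
compares the values of `φ` at two points whose ratio is `4C`; iterating `Δ₂` with `2ⁿ ≥ 4C`
yields `μ(T⁻¹A) ≤ Kⁿ μ(A)`. Null sets are handled by non-singularity.
-/

namespace OrliczFun

variable (φ : OrliczFun)

theorem apply_mul_le {t : ℝ≥0} (ht : t ≤ 1) (x : ℝ≥0) :
    φ.toFun (t * x) ≤ t * φ.toFun x := by
  simpa [φ.zero] using φ.convex t (1 - t) x 0 (add_tsub_cancel_of_le ht)

theorem monotone : Monotone φ.toFun := by
  intro x y hxy
  rcases eq_zero_or_pos y with rfl | hy
  · rw [nonpos_iff_eq_zero.1 hxy]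
  have hxy' : x / y ≤ 1 := div_le_one_of_le₀ hxy hy.le
  calc φ.toFun x = φ.toFun (x / y * y) := by rw [div_mul_cancel₀ x hy.ne']
    _ ≤ (x / y : ℝ≥0) * φ.toFun y := φ.apply_mul_le hxy' y
    _ ≤ φ.toFun y := mul_le_of_le_one_left' (by exact_mod_cast hxy')

theorem measurable : Measurable φ.toFun := φ.monotone.measurable

variable {φ} {K : ℝ≥0} (hΔ : ∀ x : ℝ≥0, φ.toFun (2 * x) ≤ K * φ.toFun x)
include hΔ

theorem apply_two_pow_mul_le (n : ℕ) (x : ℝ≥0) : φ.toFun (2 ^ n * x) ≤ K ^ n * φ.toFun x := by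
  induction n with
  | zero => simp
  | succ n ih =>
    calc φ.toFun (2 ^ (n + 1) * x) = φ.toFun (2 * (2 ^ n * x)) := by ring_nf
      _ ≤ K * φ.toFun (2 ^ n * x) := hΔ _
      _ ≤ K * (K ^ n * φ.toFun x) := by gcongr
      _ = K ^ (n + 1) * φ.toFun x := by ring

theorem apply_lt_top (x : ℝ≥0) : φ.toFun x < ⊤ := by
  obtain ⟨u, hu, hu_fin⟩ := φ.exists_finite
  obtain ⟨n, hn⟩ := pow_unbounded_of_one_lt (x / u) (one_lt_two (α := ℝ≥0))
  calc φ.toFun x ≤ φ.toFun (2 ^ n * u) := φ.monotone ((div_le_iff₀ hu).1 hn.le)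
    _ ≤ K ^ n * φ.toFun u := apply_two_pow_mul_le hΔ n u
    _ < ⊤ := ENNReal.mul_lt_top (ENNReal.pow_lt_top ENNReal.coe_lt_top) hu_fin

end OrliczFun

section Modular

variable (φ : OrliczFun) {Ω : Type*} [MeasurableSpace Ω] {μ ν : Measure Ω}

theorem modular_comp {T : Ω → Ω} (hT : Measurable T) {f : Ω → ℂ} (hf : Measurable f) :
    modular φ μ (f ∘ T) = modular φ (μ.map T) f :=
  (lintegral_map (φ.measurable.comp hf.nnnorm) hT).symm

theorem modular_le_of_le_smul {c : ℝ≥0∞} (h : ν ≤ c • μ) (f : Ω → ℂ) :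
    modular φ ν f ≤ c * modular φ μ f := by
  rw [modular, modular, ← smul_eq_mul, ← lintegral_smul_measure]
  exact lintegral_mono' h le_rfl

theorem modular_div_le {c : ℝ≥0} (hc : 1 ≤ c) (f : Ω → ℂ) :
    modular φ μ (fun x => f x / ((c : ℝ) : ℂ)) ≤ (c : ℝ≥0∞)⁻¹ * modular φ μ f := by
  have hc0 : c ≠ 0 := (zero_lt_one.trans_le hc).ne'
  rw [modular, modular, ← ENNReal.coe_inv hc0, ← lintegral_const_mul' _ _ ENNReal.coe_ne_top]
  refine lintegral_mono fun x => ?_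
  have hnorm : ‖f x / ((c : ℝ) : ℂ)‖₊ = c⁻¹ * ‖f x‖₊ := by
    ext
    simp [div_eq_inv_mul]
  rw [hnorm]
  exact φ.apply_mul_le (inv_le_one_of_one_le₀ hc) _

theorem modular_indicator_const {A : Set Ω} (hA : MeasurableSet A) (z : ℂ) :
    modular φ μ (A.indicator fun _ => z) = φ.toFun ‖z‖₊ * μ A := by
  have h : (fun x => φ.toFun ‖A.indicator (fun _ => z) x‖₊) =
      A.indicator fun _ => φ.toFun ‖z‖₊ := by
    ext x
    by_cases hx : x ∈ A <;> simp [hx, φ.zero]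
  rw [modular, h, lintegral_indicator_const hA]

end Modular

section LuxNorm

variable {φ : OrliczFun} {Ω : Type*} [MeasurableSpace Ω] {μ ν : Measure Ω} {f : Ω → ℂ}

theorem luxNorm_nonneg (φ : OrliczFun) (μ : Measure Ω) (f : Ω → ℂ) : 0 ≤ luxNorm φ μ f :=
  Real.sInf_nonneg fun _ hl => hl.1.le

theorem luxNorm_le {l : ℝ} (hl : 0 < l) (h : modular φ μ (fun x => f x / (l : ℂ)) ≤ 1) :
    luxNorm φ μ f ≤ l :=
  csInf_le ⟨0, fun _ hl' => hl'.1.le⟩ ⟨hl, h⟩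

theorem one_lt_modular_div_of_lt_luxNorm {l : ℝ} (hl : 0 < l) (h : l < luxNorm φ μ f) :
    1 < modular φ μ (fun x => f x / (l : ℂ)) :=
  lt_of_not_ge fun h' => (luxNorm_le hl h').not_gt h

theorem MemOrlicz.exists_modular_div_le_one (hf : MemOrlicz φ μ f) :
    ∃ l : ℝ, 0 < l ∧ modular φ μ (fun x => f x / (l : ℂ)) ≤ 1 := by
  obtain ⟨-, c, hc, hfin⟩ := hf
  set M := modular φ μ (fun x => (c : ℂ) * f x)
  set d : ℝ≥0 := max 1 M.toNNReal
  have hd : 1 ≤ d := le_max_left _ _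
  have hd0 : (d : ℝ≥0∞) ≠ 0 := by simp [d]
  refine ⟨d / c, by positivity, ?_⟩
  have hfun : (fun x => f x / ((d / c : ℝ) : ℂ)) = fun x => (c : ℂ) * f x / ((d : ℝ) : ℂ) := by
    ext x
    have hc' : (c : ℂ) ≠ 0 := by exact_mod_cast hc.ne'
    push_cast
    field_simp
  have hM : M ≤ d := (ENNReal.coe_toNNReal hfin.ne).symm.le.trans (by simp [d])
  calc modular φ μ (fun x => f x / ((d / c : ℝ) : ℂ)) ≤ (d : ℝ≥0∞)⁻¹ * M :=
        hfun ▸ modular_div_le φ hd _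
    _ ≤ (d : ℝ≥0∞)⁻¹ * d := by gcongr
    _ = 1 := ENNReal.inv_mul_cancel hd0 ENNReal.coe_ne_top

theorem modular_div_le_one_of_luxNorm_lt (hf : MemOrlicz φ μ f) {l : ℝ}
    (h : luxNorm φ μ f < l) : modular φ μ (fun x => f x / (l : ℂ)) ≤ 1 := by
  obtain ⟨l', ⟨hl', hmod⟩, hl'l⟩ :=
    exists_lt_of_csInf_lt (s := {l : ℝ | 0 < l ∧ modular φ μ (fun x => f x / (l : ℂ)) ≤ 1})
      hf.exists_modular_div_le_one h
  refine le_trans (lintegral_mono fun x => φ.monotone ?_) hmod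
  rw [← NNReal.coe_le_coe]
  simp only [coe_nnnorm, norm_div, Complex.norm_real, Real.norm_of_nonneg hl'.le,
    Real.norm_of_nonneg (hl'.trans hl'l).le]
  gcongr

theorem luxNorm_le_mul_of_le_smul {c : ℝ≥0} (hc : 1 ≤ c) (h : ν ≤ (c : ℝ≥0∞) • μ)
    (hf : MemOrlicz φ μ f) : luxNorm φ ν f ≤ c * luxNorm φ μ f := by
  have hc0 : (0 : ℝ) < c := zero_lt_one.trans_le hc
  rw [← div_le_iff₀' hc0]
  refine le_of_forall_gt_imp_ge_of_dense fun l hl => ?_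
  have hl0 : 0 < l := (luxNorm_nonneg φ μ f).trans_lt hl
  rw [div_le_iff₀' hc0]
  refine luxNorm_le (by positivity) ?_
  have hfun : (fun x => f x / ((c * l : ℝ) : ℂ)) = fun x => f x / (l : ℂ) / ((c : ℝ) : ℂ) := by
    ext x
    push_cast
    rw [div_div, mul_comm]
  have hc' : (c : ℝ≥0∞) ≠ 0 := by simpa using (zero_lt_one.trans_le hc).ne'
  calc modular φ ν (fun x => f x / ((c * l : ℝ) : ℂ))
      ≤ c * modular φ μ (fun x => f x / (l : ℂ) / ((c : ℝ) : ℂ)) :=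
        hfun ▸ modular_le_of_le_smul φ h _
    _ ≤ c * ((c : ℝ≥0∞)⁻¹ * 1) := by
        gcongr
        exact (modular_div_le φ hc _).trans
          (by gcongr; exact modular_div_le_one_of_luxNorm_lt hf hl)
    _ = 1 := by rw [mul_one, ENNReal.mul_inv_cancel hc' ENNReal.coe_ne_top]

theorem memOrlicz_zero (φ : OrliczFun) (μ : Measure Ω) : MemOrlicz φ μ 0 :=
  ⟨measurable_zero, 1, one_pos, by simp [modular, φ.zero]⟩

theorem luxNorm_zero (φ : OrliczFun) (μ : Measure Ω) : luxNorm φ μ 0 = 0 :=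
  le_antisymm
    (le_of_forall_gt_imp_ge_of_dense fun _ hl => luxNorm_le hl (by simp [modular, φ.zero]))
    (luxNorm_nonneg φ μ 0)

end LuxNorm

theorem MeasureTheory.Measure.le_of_forall_measure_lt_top_le {α : Type*} [MeasurableSpace α]
    {μ ν ρ : Measure α} [SigmaFinite μ]
    (h : ∀ s, MeasurableSet s → μ s < ⊤ → ν s ≤ ρ s) : ν ≤ ρ := by
  refine Measure.le_intro fun s hs _ => ?_
  have hmono : Monotone fun n => s ∩ spanningSets μ n :=
    fun i j hij => Set.inter_subset_inter_right _ (monotone_spanningSets μ hij)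
  have hunion : ⋃ n, s ∩ spanningSets μ n = s := by
    rw [← Set.inter_iUnion, iUnion_spanningSets, Set.inter_univ]
  rw [← hunion, hmono.measure_iUnion, hmono.measure_iUnion]
  exact iSup_mono fun n => h _ (hs.inter (measurableSet_spanningSets μ n))
    ((measure_mono Set.inter_subset_right).trans_lt (measure_spanningSets_lt_top μ n))

section Composition

variable {φ : OrliczFun} {Ω : Type*} [MeasurableSpace Ω] {μ : Measure Ω} {T : Ω → Ω}
  {m : ℝ≥0} {f : Ω → ℂ}

theorem MemOrlicz.comp (hf : MemOrlicz φ μ f) (hT : Measurable T)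
    (hmap : μ.map T ≤ (m : ℝ≥0∞) • μ) : MemOrlicz φ μ (f ∘ T) := by
  obtain ⟨hfm, c, hc, hfin⟩ := hf
  refine ⟨hfm.comp hT, c, hc, ?_⟩
  calc modular φ μ ((fun x => (c : ℂ) * f x) ∘ T)
      = modular φ (μ.map T) (fun x => (c : ℂ) * f x) := modular_comp φ hT (by fun_prop)
    _ ≤ m * modular φ μ (fun x => (c : ℂ) * f x) := modular_le_of_le_smul φ hmap _
    _ < ⊤ := ENNReal.mul_lt_top ENNReal.coe_lt_top hfin

theorem luxNorm_comp (hT : Measurable T) (hf : Measurable f) :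
    luxNorm φ μ (f ∘ T) = luxNorm φ (μ.map T) f := by
  unfold luxNorm
  congr! 4 with l
  rw [← modular_comp φ hT (hf.div_const _)]
  rfl

theorem luxNorm_comp_le (hf : MemOrlicz φ μ f) (hT : Measurable T) (hm : 1 ≤ m)
    (hmap : μ.map T ≤ (m : ℝ≥0∞) • μ) : luxNorm φ μ (f ∘ T) ≤ m * luxNorm φ μ f :=
  luxNorm_comp hT hf.1 ▸ luxNorm_le_mul_of_le_smul hm hmap hf

end Composition

section Indicator

variable {φ : OrliczFun} {Ω : Type*} [MeasurableSpace Ω] {μ : Measure Ω} {A B : Set Ω}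

theorem modular_indicator_one_div (hA : MeasurableSet A) {l : ℝ} (hl : 0 < l) :
    modular φ μ (fun x => A.indicator 1 x / (l : ℂ)) = φ.toFun l.toNNReal⁻¹ * μ A := by
  have hfun : (fun x => A.indicator 1 x / (l : ℂ)) = A.indicator fun _ => (l : ℂ)⁻¹ := by
    ext x
    by_cases hx : x ∈ A <;> simp [hx]
  have hnorm : ‖(l : ℂ)⁻¹‖₊ = l.toNNReal⁻¹ := by
    ext
    simp [abs_of_pos hl, hl.le]
  rw [hfun, modular_indicator_const φ hA, hnorm]

theorem memOrlicz_indicator_one {K : ℝ≥0} (hΔ : ∀ x : ℝ≥0, φ.toFun (2 * x) ≤ K * φ.toFun x)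
    (hA : MeasurableSet A) (hA_fin : μ A < ⊤) : MemOrlicz φ μ (A.indicator 1) := by
  refine ⟨measurable_one.indicator hA, 1, one_pos, ?_⟩
  have hfun : (fun x => ((1 : ℝ≥0) : ℂ) * A.indicator 1 x) = A.indicator fun _ => 1 := by
    ext x
    by_cases hx : x ∈ A <;> simp [hx]
  rw [hfun, modular_indicator_const φ hA]
  exact ENNReal.mul_lt_top (OrliczFun.apply_lt_top hΔ _) hA_fin

theorem luxNorm_indicator_one_pos (hA : MeasurableSet A) (hA_mem : MemOrlicz φ μ (A.indicator 1))
    (hA0 : μ A ≠ 0) : 0 < luxNorm φ μ (A.indicator 1) := by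
  by_contra! h
  obtain ⟨x, hx_big, hx0⟩ := ((φ.tendsto_top.eventually
    (lt_mem_nhds (ENNReal.inv_lt_top.2 (pos_iff_ne_zero.2 hA0)))).and
    (Filter.eventually_gt_atTop 0)).exists
  have hx_inv : (0 : ℝ) < (x : ℝ)⁻¹ := inv_pos.2 (NNReal.coe_pos.2 hx0)
  have hmod := modular_div_le_one_of_luxNorm_lt hA_mem (h.trans_lt hx_inv)
  rw [modular_indicator_one_div hA hx_inv, Real.toNNReal_inv,
    Real.toNNReal_coe, inv_inv] at hmod
  exact (ENNReal.le_inv_iff_mul_le.2 hmod).not_gt hx_big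

theorem measure_le_of_luxNorm_indicator_le {K : ℝ≥0}
    (hΔ : ∀ x : ℝ≥0, φ.toFun (2 * x) ≤ K * φ.toFun x) (hA : MeasurableSet A)
    (hB : MeasurableSet B) (hA_mem : MemOrlicz φ μ (A.indicator 1))
    (hB_mem : MemOrlicz φ μ (B.indicator 1)) (hA0 : μ A ≠ 0) {C : ℝ} (hC : 0 < C) {n : ℕ}
    (hn : 4 * C ≤ 2 ^ n)
    (hle : luxNorm φ μ (B.indicator 1) ≤ C * luxNorm φ μ (A.indicator 1)) :
    μ B ≤ K ^ n * μ A := by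
  set a := luxNorm φ μ (A.indicator 1)
  have ha : 0 < a := luxNorm_indicator_one_pos hA hA_mem hA0
  have hCa : 0 < 2 * C * a := by positivity
  have hlower : 1 < φ.toFun (a / 2).toNNReal⁻¹ * μ A :=
    modular_indicator_one_div hA (half_pos ha) ▸
      one_lt_modular_div_of_lt_luxNorm (half_pos ha) (half_lt_self ha)
  set t := φ.toFun (2 * C * a).toNNReal⁻¹
  have hupper : t * μ B ≤ 1 :=
    modular_indicator_one_div hB hCa ▸
      modular_div_le_one_of_luxNorm_lt hB_mem (hle.trans_lt (by nlinarith))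
  have harg : (a / 2).toNNReal⁻¹ ≤ 2 ^ n * (2 * C * a).toNNReal⁻¹ := by
    rw [← NNReal.coe_le_coe]
    push_cast
    rw [Real.coe_toNNReal _ (half_pos ha).le, Real.coe_toNNReal _ hCa.le, ← div_eq_mul_inv,
      inv_div, div_le_div_iff₀ ha hCa]
    nlinarith
  have hchain : 1 < K ^ n * t * μ A :=
    calc 1 < φ.toFun (a / 2).toNNReal⁻¹ * μ A := hlower
      _ ≤ φ.toFun (2 ^ n * (2 * C * a).toNNReal⁻¹) * μ A := by gcongr; exact φ.monotone harg
      _ ≤ K ^ n * t * μ A := by gcongr; exact OrliczFun.apply_two_pow_mul_le hΔ n _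
  have ht0 : t ≠ 0 := by
    intro ht
    simp [ht] at hchain
  refine (ENNReal.mul_le_mul_iff_right ht0 (OrliczFun.apply_lt_top hΔ _).ne).1 ?_
  calc t * μ B ≤ 1 := hupper
    _ ≤ t * (K ^ n * μ A) := by rw [← mul_assoc, mul_comm t]; exact hchain.le

end Indicator

section Bicomplex

variable (φ : OrliczFun) {Ω : Type*} [MeasurableSpace Ω] (μ : Measure Ω)

theorem bcLuxNorm_le_mul {f₁ f₂ g₁ g₂ : Ω → ℂ} {C : ℝ} (hC : 0 ≤ C)
    (h₁ : luxNorm φ μ g₁ ≤ C * luxNorm φ μ f₁)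
    (h₂ : luxNorm φ μ g₂ ≤ C * luxNorm φ μ f₂) :
    bcLuxNorm φ μ (g₁, g₂) ≤ C * bcLuxNorm φ μ (f₁, f₂) := by
  have hsq : luxNorm φ μ g₁ ^ 2 + luxNorm φ μ g₂ ^ 2 ≤
      C ^ 2 * (luxNorm φ μ f₁ ^ 2 + luxNorm φ μ f₂ ^ 2) := by
    have := luxNorm_nonneg φ μ g₁
    have := luxNorm_nonneg φ μ g₂
    nlinarith
  unfold bcLuxNorm
  rw [mul_left_comm, ← Real.sqrt_sq hC, ← Real.sqrt_mul (sq_nonneg C)]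
  gcongr

theorem bcLuxNorm_zero_right (g : Ω → ℂ) :
    bcLuxNorm φ μ (g, 0) = luxNorm φ μ g / Real.sqrt 2 := by
  rw [bcLuxNorm, luxNorm_zero, zero_pow two_ne_zero, add_zero,
    Real.sqrt_sq (luxNorm_nonneg φ μ g), one_div_mul_eq_div]

end Bicomplex

theorem bicomplex_orlicz_composition_bounded_iff_general {Ω : Type*} [MeasurableSpace Ω]
    (μ : Measure Ω) [SigmaFinite μ] (φ : OrliczFun)
    (hΔ₂ : ∃ K : ℝ≥0, 0 < K ∧ ∀ x : ℝ≥0, φ.toFun (2 * x) ≤ (K : ℝ≥0∞) * φ.toFun x)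
    (T : Ω → Ω) (hTm : Measurable T)
    (hns : ∀ A : Set Ω, MeasurableSet A → μ A = 0 → μ (T ⁻¹' A) = 0) :
    (∃ C : ℝ, 0 < C ∧ ∀ f₁ f₂ : Ω → ℂ, MemOrlicz φ μ f₁ → MemOrlicz φ μ f₂ →
        MemOrlicz φ μ (f₁ ∘ T) ∧ MemOrlicz φ μ (f₂ ∘ T) ∧
          bcLuxNorm φ μ (f₁ ∘ T, f₂ ∘ T) ≤ C * bcLuxNorm φ μ (f₁, f₂)) ↔
      (∃ m : ℝ≥0, 0 < m ∧ ∀ A : Set Ω, MeasurableSet A → μ A < ⊤ →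
        μ (T ⁻¹' A) ≤ (m : ℝ≥0∞) * μ A) := by
  obtain ⟨K, hK, hΔ⟩ := hΔ₂
  constructor
  · rintro ⟨C, hC, hbound⟩
    obtain ⟨n, hn⟩ := pow_unbounded_of_one_lt (4 * C) one_lt_two
    refine ⟨K ^ n, pow_pos hK n, fun A hA hA_fin => ?_⟩
    rcases eq_or_ne (μ A) 0 with hA0 | hA0
    · simp [hns A hA hA0]
    have hA_mem := memOrlicz_indicator_one hΔ hA hA_fin
    obtain ⟨hB_mem, -, hle⟩ := hbound _ 0 hA_mem (memOrlicz_zero φ μ)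
    have hcomp : A.indicator 1 ∘ T = (T ⁻¹' A).indicator (1 : Ω → ℂ) := by
      ext x
      exact (Set.indicator_comp_right T).symm
    rw [hcomp, Pi.zero_comp, bcLuxNorm_zero_right, bcLuxNorm_zero_right, mul_div_assoc',
      div_le_div_iff_of_pos_right (by positivity)] at hle
    rw [hcomp] at hB_mem
    exact_mod_cast measure_le_of_luxNorm_indicator_le hΔ hA (hTm hA) hA_mem hB_mem hA0 hC hn.le hle
  · rintro ⟨m, -, hm⟩
    have hmap : μ.map T ≤ ((max m 1 : ℝ≥0) : ℝ≥0∞) • μ :=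
      Measure.le_of_forall_measure_lt_top_le fun A hA hA_fin => by
        rw [Measure.map_apply hTm hA, Measure.smul_apply, smul_eq_mul]
        exact (hm A hA hA_fin).trans (by gcongr; exact le_max_left _ _)
    refine ⟨max m 1, by positivity, fun f₁ f₂ h₁ h₂ => ⟨h₁.comp hTm hmap, h₂.comp hTm hmap, ?_⟩⟩
    exact bcLuxNorm_le_mul φ μ (by positivity) (luxNorm_comp_le h₁ hTm (le_max_right _ _) hmap)
      (luxNorm_comp_le h₂ hTm (le_max_right _ _) hmap)

/-- For a non-singular measurable transformation `T` of a σ-finite complete measure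
space and an Orlicz function `φ` satisfying the `Δ₂` condition, the composition
operator `C_T(f₁, f₂) = (f₁ ∘ T, f₂ ∘ T)` maps `L^φ(𝔹ℂ)` boundedly into itself iff
there is `m > 0` with `μ(T⁻¹(A)) ≤ m·μ(A)` for all `A` of finite measure. -/
theorem bicomplex_orlicz_composition_bounded_iff {Ω : Type*} [MeasurableSpace Ω]
    (μ : Measure Ω) [SigmaFinite μ] (hμ : μ.IsComplete) (φ : OrliczFun)
    (hΔ₂ : ∃ K : ℝ≥0, 0 < K ∧ ∀ x : ℝ≥0, φ.toFun (2 * x) ≤ (K : ℝ≥0∞) * φ.toFun x)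
    (T : Ω → Ω) (hTm : Measurable T)
    (hns : ∀ A : Set Ω, MeasurableSet A → μ A = 0 → μ (T ⁻¹' A) = 0) :
    (∃ C : ℝ, 0 < C ∧ ∀ f₁ f₂ : Ω → ℂ, MemOrlicz φ μ f₁ → MemOrlicz φ μ f₂ →
        MemOrlicz φ μ (f₁ ∘ T) ∧ MemOrlicz φ μ (f₂ ∘ T) ∧
          bcLuxNorm φ μ (f₁ ∘ T, f₂ ∘ T) ≤ C * bcLuxNorm φ μ (f₁, f₂)) ↔
      (∃ m : ℝ≥0, 0 < m ∧ ∀ A : Set Ω, MeasurableSet A → μ A < ⊤ →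
        μ (T ⁻¹' A) ≤ (m : ℝ≥0∞) * μ A) :=
  bicomplex_orlicz_composition_bounded_iff_general μ φ hΔ₂ T hTm hns
end
end
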